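/- Let (Ω, Σ, μ) be a finite measure space and X a Banach space with the following property (the Radon–Nikodým property with respect to μ): for every countably additive vector measure ν : Σ → X of bounded variation that vanishes on μ-null sets, there exists a Bochner-integrable function g : Ω → X such that ν(A) = (Bochner)∫_A g dμ for all A ∈ Σ. Then every RL-integrable function f : Ω → X has a Bochner-integrable equivalent. -/

import Mathlib

/-!
Let `P` be a partition witnessing the RL integral of `f` over `Ω` to precision `ε`. A partition
of a measurable set `A` refining `P`, completed by the pieces `P i \ A`, refines `P` over `Ω`; so
the RL sums over `A` form a Cauchy net, and `ν A`, the RL integral over `A`, exists. By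
uniqueness `ν` is finitely additive.

For `ε = 1`, moving one sampling point inside `P i` changes the sum by less than `2`, so
`μ (P i) * sup_{P i} ‖f‖` is finite; sampling near these suprema shows that they are summable.
Hence the step function equal to `sup_{P i} ‖f‖` on `P i` is integrable, and `‖ν A‖` is bounded by
its integral over `A`. Being dominated by a finite measure absolutely continuous with respect
to `μ`, the set function `ν` is countably additive, of bounded variation and vanishes on null
sets, and the Radon–Nikodým property gives its Bochner density.
-/


open MeasureTheory Set Pointwise

/-- A countable partition of `A` into pairwise disjoint measurable pieces
(possibly empty, so that finite partitions are included). -/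
def IsRLPartition {Ω : Type*} [MeasurableSpace Ω] (A : Set Ω) (P : ℕ → Set Ω) : Prop :=
  (∀ i, MeasurableSet (P i)) ∧ Pairwise (Function.onFun Disjoint P) ∧ (⋃ i, P i) = A

/-- `Γ` is finer than (inscribed into) `P`: every piece of `Γ` is contained in a piece of `P`. -/
def IsFinerPartition {Ω : Type*} (Γ P : ℕ → Set Ω) : Prop :=
  ∀ j, ∃ i, Γ j ⊆ P i

/-- `T` is a choice of sampling points for the partition `P`. -/
def IsSampling {Ω : Type*} (P : ℕ → Set Ω) (T : ℕ → Ω) : Prop :=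
  ∀ i, (P i).Nonempty → T i ∈ P i

/-- The RL integral sum `S(f, P, T) = ∑ᵢ μ(Pᵢ) • f(Tᵢ)`. -/
noncomputable def RLSum {Ω X : Type*} [MeasurableSpace Ω] [NormedAddCommGroup X]
    [NormedSpace ℝ X] (μ : Measure Ω) (f : Ω → X) (P : ℕ → Set Ω) (T : ℕ → Ω) : X :=
  ∑' i, (μ (P i)).toReal • f (T i)

/-- Absolute convergence of the RL integral sum. -/
def RLSumAbsConv {Ω X : Type*} [MeasurableSpace Ω] [NormedAddCommGroup X]
    (μ : Measure Ω) (f : Ω → X) (P : ℕ → Set Ω) (T : ℕ → Ω) : Prop :=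
  Summable fun i => (μ (P i)).toReal * ‖f (T i)‖

/-- `f` is RL-integrable over `A` with RL integral `x`. -/
def HasRLIntegral {Ω X : Type*} [MeasurableSpace Ω] [NormedAddCommGroup X] [NormedSpace ℝ X]
    (μ : Measure Ω) (f : Ω → X) (A : Set Ω) (x : X) : Prop :=
  ∀ ε > 0, ∃ P : ℕ → Set Ω, IsRLPartition A P ∧
    ∀ Γ : ℕ → Set Ω, IsRLPartition A Γ → IsFinerPartition Γ P →
      ∀ T : ℕ → Ω, IsSampling Γ T →
        RLSumAbsConv μ f Γ T ∧ ‖RLSum μ f Γ T - x‖ < ε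

/-- `f` has a Lebesgue-integrable majorant, i.e. `f ∈ L̄₁(Ω, Σ, μ, X)`. -/
def HasIntegrableMajorant {Ω X : Type*} [MeasurableSpace Ω] [NormedAddCommGroup X]
    (μ : Measure Ω) (f : Ω → X) : Prop :=
  ∃ g : Ω → ℝ, Integrable g μ ∧ ∀ t, ‖f t‖ ≤ g t

/-- The limit set `I(f)`: all limit points of the net of absolute RL integral sums. -/
def RLLimitSet {Ω X : Type*} [MeasurableSpace Ω] [NormedAddCommGroup X] [NormedSpace ℝ X]
    (μ : Measure Ω) (f : Ω → X) : Set X :=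
  {x | ∀ ε > 0, ∀ P : ℕ → Set Ω, IsRLPartition Set.univ P →
    ∃ Γ : ℕ → Set Ω, IsRLPartition Set.univ Γ ∧ IsFinerPartition Γ P ∧
      ∃ T : ℕ → Ω, IsSampling Γ T ∧ RLSumAbsConv μ f Γ T ∧ ‖RLSum μ f Γ T - x‖ < ε}

/-- `g` is a Bochner-integrable equivalent of `f`: `g` is Bochner integrable and the
RL integral of `f` over every measurable set equals the Bochner integral of `g` over it. -/
def BochnerEquivalent {Ω X : Type*} [MeasurableSpace Ω] [NormedAddCommGroup X] [NormedSpace ℝ X]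
    (μ : Measure Ω) (f g : Ω → X) : Prop :=
  Integrable g μ ∧ ∀ A : Set Ω, MeasurableSet A → HasRLIntegral μ f A (∫ ω in A, g ω ∂μ)

/-- `f : [0,1] → X` is Riemann integrable with Riemann integral `x`. -/
def HasRiemannIntegral {X : Type*} [NormedAddCommGroup X] [NormedSpace ℝ X]
    (f : ℝ → X) (x : X) : Prop :=
  ∀ ε > 0, ∃ δ > 0, ∀ (n : ℕ) (a : ℕ → ℝ) (t : ℕ → ℝ),
    a 0 = 0 → a n = 1 → (∀ i < n, a i ≤ a (i + 1)) →
    (∀ i < n, a (i + 1) - a i < δ) →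
    (∀ i < n, t i ∈ Set.Icc (a i) (a (i + 1))) →
    ‖(∑ i ∈ Finset.range n, (a (i + 1) - a i) • f (t i)) - x‖ < ε


open Filter Topology
open scoped ENNReal

section Partitions

variable {Ω α : Type*}

lemma IsFinerPartition.refl (P : ℕ → Set Ω) : IsFinerPartition P P :=
  fun j => ⟨j, subset_rfl⟩

lemma IsFinerPartition.trans {Γ Q P : ℕ → Set Ω} (hΓ : IsFinerPartition Γ Q)
    (hQ : IsFinerPartition Q P) : IsFinerPartition Γ P := fun j =>
  let ⟨i, hi⟩ := hΓ j
  let ⟨k, hk⟩ := hQ i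
  ⟨k, hi.trans hk⟩

lemma isFinerPartition_inter (P : ℕ → Set Ω) (B : Set Ω) :
    IsFinerPartition (fun i => P i ∩ B) P :=
  fun i => ⟨i, inter_subset_left⟩

def commonRefinement (P Q : ℕ → Set Ω) : ℕ → Set Ω :=
  fun n => P (Nat.unpair n).1 ∩ Q (Nat.unpair n).2

lemma isFinerPartition_commonRefinement_left (P Q : ℕ → Set Ω) :
    IsFinerPartition (commonRefinement P Q) P :=
  fun _ => ⟨_, inter_subset_left⟩

lemma isFinerPartition_commonRefinement_right (P Q : ℕ → Set Ω) :
    IsFinerPartition (commonRefinement P Q) Q :=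
  fun _ => ⟨_, inter_subset_right⟩

def glue (a b : ℕ → α) : ℕ → α :=
  Sum.elim a b ∘ Equiv.natSumNatEquivNat.symm

@[simp]
lemma glue_two_mul (a b : ℕ → α) (k : ℕ) : glue a b (2 * k) = a k := by
  simp [glue, Equiv.natSumNatEquivNat_symm_apply]

@[simp]
lemma glue_two_mul_add_one (a b : ℕ → α) (k : ℕ) : glue a b (2 * k + 1) = b k := by
  simp [glue, Equiv.natSumNatEquivNat_symm_apply]

lemma isFinerPartition_glue {P Q R : ℕ → Set Ω} (hP : IsFinerPartition P R)
    (hQ : IsFinerPartition Q R) : IsFinerPartition (glue P Q) R := fun n => by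
  obtain ⟨k, rfl | rfl⟩ := n.even_or_odd'
  · simpa using hP k
  · simpa using hQ k

lemma isSampling_glue {P Q : ℕ → Set Ω} {T U : ℕ → Ω} (hT : IsSampling P T)
    (hU : IsSampling Q U) : IsSampling (glue P Q) (glue T U) := fun n => by
  obtain ⟨k, rfl | rfl⟩ := n.even_or_odd'
  · simpa using hT k
  · simpa using hU k

lemma IsFinerPartition.glue_cases {Γ P Q : ℕ → Set Ω} (h : IsFinerPartition Γ (glue P Q))
    (j : ℕ) : (∃ k, Γ j ⊆ P k) ∨ ∃ k, Γ j ⊆ Q k := by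
  obtain ⟨n, hn⟩ := h j
  obtain ⟨k, rfl | rfl⟩ := n.even_or_odd'
  · exact .inl ⟨k, by simpa using hn⟩
  · exact .inr ⟨k, by simpa using hn⟩

lemma IsSampling.inter {Γ : ℕ → Set Ω} {T : ℕ → Ω} {A : Set Ω} (hT : IsSampling Γ T)
    (hA : ∀ j, Γ j ⊆ A ∨ Disjoint (Γ j) A) : IsSampling (fun j => Γ j ∩ A) T := by
  intro j ⟨t, ht⟩
  rcases hA j with hsub | hdisj
  · exact ⟨hT j ⟨t, ht.1⟩, hsub (hT j ⟨t, ht.1⟩)⟩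
  · exact absurd ht.2 (hdisj.notMem_of_mem_left ht.1)

lemma exists_isSampling [Nonempty Ω] (P : ℕ → Set Ω) : ∃ T, IsSampling P T :=
  ⟨fun i => Classical.epsilon (· ∈ P i), fun _ hi => Classical.epsilon_spec hi⟩

variable [MeasurableSpace Ω] {A B : Set Ω} {P Q : ℕ → Set Ω}

lemma IsRLPartition.subset (hP : IsRLPartition A P) (i : ℕ) : P i ⊆ A :=
  hP.2.2 ▸ subset_iUnion P i

lemma IsRLPartition.measurableSet (hP : IsRLPartition A P) : MeasurableSet A :=
  hP.2.2 ▸ .iUnion hP.1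

lemma IsRLPartition.inter (hP : IsRLPartition A P) (hB : MeasurableSet B) :
    IsRLPartition (A ∩ B) (fun i => P i ∩ B) :=
  ⟨fun i => (hP.1 i).inter hB,
    fun _ _ hij => (hP.2.1 hij).mono inter_subset_left inter_subset_left,
    by rw [← iUnion_inter, hP.2.2]⟩

lemma isRLPartition_commonRefinement (hP : IsRLPartition A P) (hQ : IsRLPartition A Q) :
    IsRLPartition A (commonRefinement P Q) := by
  refine ⟨fun n => (hP.1 _).inter (hQ.1 _), fun n m hnm => ?_, ?_⟩
  · by_cases h : (Nat.unpair n).1 = (Nat.unpair m).1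
    · have h2 : (Nat.unpair n).2 ≠ (Nat.unpair m).2 := fun h2 =>
        hnm (Nat.pairEquiv.symm.injective (Prod.ext h h2))
      exact (hQ.2.1 h2).mono inter_subset_right inter_subset_right
    · exact (hP.2.1 h).mono inter_subset_left inter_subset_left
  · change ⋃ n, P (Nat.unpair n).1 ∩ Q (Nat.unpair n).2 = A
    rw [iUnion_unpair (fun i j => P i ∩ Q j), ← iUnion_inter_iUnion, hP.2.2, hQ.2.2,
      inter_self]

lemma isRLPartition_glue (hAB : Disjoint A B) (hP : IsRLPartition A P)
    (hQ : IsRLPartition B Q) : IsRLPartition (A ∪ B) (glue P Q) := by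
  refine ⟨fun n => ?_, ?_, ?_⟩
  · obtain ⟨k, rfl | rfl⟩ := n.even_or_odd'
    · simpa using hP.1 k
    · simpa using hQ.1 k
  · refine Pairwise.comp_of_injective (r := Function.onFun Disjoint (Sum.elim P Q)) ?_
      Equiv.natSumNatEquivNat.symm.injective
    rintro (i | i) (j | j) hij
    · exact hP.2.1 fun h => hij (congrArg _ h)
    · exact hAB.mono (hP.subset i) (hQ.subset j)
    · exact (hAB.mono (hP.subset j) (hQ.subset i)).symm
    · exact hQ.2.1 fun h => hij (congrArg _ h)
  · change ⋃ n, Sum.elim P Q (Equiv.natSumNatEquivNat.symm n) = A ∪ B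
    rw [Equiv.natSumNatEquivNat.symm.surjective.iUnion_comp (Sum.elim P Q),
      iUnion_sumElim, hP.2.2, hQ.2.2]

end Partitions

section RLSums

variable {Ω X : Type*} [MeasurableSpace Ω] [NormedAddCommGroup X]
  {μ : Measure Ω} {f : Ω → X} {P Q : ℕ → Set Ω} {T U : ℕ → Ω}

lemma rlSumAbsConv_iff [IsFiniteMeasure μ] :
    RLSumAbsConv μ f P T ↔ ∑' i, μ (P i) * ‖f (T i)‖ₑ ≠ ∞ := by
  convert (ENNReal.tsum_coe_ne_top_iff_summable_coe
    (f := fun i => (μ (P i)).toNNReal * ‖f (T i)‖₊)).symm using 1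
  · simp [RLSumAbsConv, ENNReal.coe_toNNReal_eq_toReal]
  · simp [ENNReal.coe_toNNReal (measure_ne_top μ _), enorm]

lemma toReal_tsum_measure_mul_enorm [IsFiniteMeasure μ] :
    (∑' i, μ (P i) * ‖f (T i)‖ₑ).toReal = ∑' i, (μ (P i)).toReal * ‖f (T i)‖ := by
  rw [ENNReal.tsum_toReal_eq fun i => ENNReal.mul_ne_top (measure_ne_top μ _) enorm_ne_top]
  simp

variable [NormedSpace ℝ X]

lemma RLSumAbsConv.norm_rlSum_le (h : RLSumAbsConv μ f P T) :
    ‖RLSum μ f P T‖ ≤ ∑' i, (μ (P i)).toReal * ‖f (T i)‖ := by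
  simpa [RLSum, norm_smul] using norm_tsum_le_tsum_norm (f := fun i => (μ (P i)).toReal • f (T i))
    (by simpa [RLSumAbsConv, norm_smul] using h)

variable [CompleteSpace X]

lemma RLSumAbsConv.summable (h : RLSumAbsConv μ f P T) :
    Summable fun i => (μ (P i)).toReal • f (T i) :=
  .of_norm <| by simpa [RLSumAbsConv, norm_smul] using h

lemma rlSum_update_sub_rlSum_update {i : ℕ} {a b : Ω}
    (ha : RLSumAbsConv μ f P (Function.update T i a))
    (hb : RLSumAbsConv μ f P (Function.update T i b)) :
    RLSum μ f P (Function.update T i a) - RLSum μ f P (Function.update T i b) =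
      (μ (P i)).toReal • (f a - f b) := by
  rw [RLSum, RLSum, ← ha.summable.tsum_sub hb.summable, tsum_eq_single i fun j hj => by
    simp [Function.update_of_ne hj]]
  simp [smul_sub]

lemma RLSumAbsConv.of_glue (h : RLSumAbsConv μ f (glue P Q) (glue T U)) :
    RLSumAbsConv μ f P T ∧ RLSumAbsConv μ f Q U ∧
      RLSum μ f (glue P Q) (glue T U) = RLSum μ f P T + RLSum μ f Q U := by
  have hP : RLSumAbsConv μ f P T := by
    simpa [RLSumAbsConv, Function.comp_def] using
      h.comp_injective (mul_right_injective₀ two_ne_zero)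
  have hQ : RLSumAbsConv μ f Q U := by
    simpa [RLSumAbsConv, Function.comp_def] using
      h.comp_injective ((add_left_injective 1).comp (mul_right_injective₀ two_ne_zero))
  refine ⟨hP, hQ, ?_⟩
  rw [RLSum, ← tsum_even_add_odd (by simpa using hP.summable) (by simpa using hQ.summable)]
  simp [RLSum]

lemma RLSumAbsConv.add_of_measure_eq [IsFiniteMeasure μ] {Γ Γ₁ Γ₂ : ℕ → Set Ω}
    (h : ∀ j, μ (Γ j) = μ (Γ₁ j) + μ (Γ₂ j)) (h₁ : RLSumAbsConv μ f Γ₁ T)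
    (h₂ : RLSumAbsConv μ f Γ₂ T) :
    RLSumAbsConv μ f Γ T ∧ RLSum μ f Γ T = RLSum μ f Γ₁ T + RLSum μ f Γ₂ T := by
  have hreal (j : ℕ) : (μ (Γ j)).toReal = (μ (Γ₁ j)).toReal + (μ (Γ₂ j)).toReal := by
    rw [h j, ENNReal.toReal_add (measure_ne_top μ _) (measure_ne_top μ _)]
  refine ⟨(h₁.add h₂).congr fun j => by simp [hreal, add_mul], ?_⟩
  rw [RLSum, RLSum, RLSum, ← h₁.summable.tsum_add h₂.summable]
  simp [hreal, add_smul]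

end RLSums

section RLIntegral

variable {Ω X : Type*} [MeasurableSpace Ω] [NormedAddCommGroup X] [NormedSpace ℝ X]
  {μ : Measure Ω} {f : Ω → X} {A B : Set Ω} {P Q : ℕ → Set Ω} {x y : X} {ε δ : ℝ}

def IsRLApprox (μ : Measure Ω) (f : Ω → X) (A : Set Ω) (x : X) (ε : ℝ) (P : ℕ → Set Ω) :
    Prop :=
  IsRLPartition A P ∧ ∀ Γ, IsRLPartition A Γ → IsFinerPartition Γ P →
    ∀ T, IsSampling Γ T → RLSumAbsConv μ f Γ T ∧ ‖RLSum μ f Γ T - x‖ < ε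

lemma hasRLIntegral_iff : HasRLIntegral μ f A x ↔ ∀ ε > 0, ∃ P, IsRLApprox μ f A x ε P :=
  Iff.rfl

lemma IsRLApprox.mono (h : IsRLApprox μ f A x ε P) (hδ : ε + ‖x - y‖ ≤ δ) :
    IsRLApprox μ f A y δ P := by
  refine ⟨h.1, fun Γ hΓ hΓP T hT => ⟨(h.2 Γ hΓ hΓP T hT).1, ?_⟩⟩
  calc ‖RLSum μ f Γ T - y‖ ≤ ‖RLSum μ f Γ T - x‖ + ‖x - y‖ :=
        norm_sub_le_norm_sub_add_norm_sub _ _ _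
    _ < ε + ‖x - y‖ := by gcongr; exact (h.2 Γ hΓ hΓP T hT).2
    _ ≤ δ := hδ

lemma IsRLApprox.norm_sub_lt [Nonempty Ω] (hx : IsRLApprox μ f A x ε P)
    (hy : IsRLApprox μ f A y δ Q) : ‖x - y‖ < ε + δ := by
  obtain ⟨T, hT⟩ := exists_isSampling (commonRefinement P Q)
  have hR := isRLPartition_commonRefinement hx.1 hy.1
  have h₁ := (hx.2 _ hR (isFinerPartition_commonRefinement_left P Q) T hT).2
  have h₂ := (hy.2 _ hR (isFinerPartition_commonRefinement_right P Q) T hT).2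
  have := dist_triangle_left x y (RLSum μ f (commonRefinement P Q) T)
  rw [dist_eq_norm, dist_eq_norm, dist_eq_norm] at this
  linarith

lemma HasRLIntegral.unique [Nonempty Ω] (hx : HasRLIntegral μ f A x)
    (hy : HasRLIntegral μ f A y) : x = y := by
  by_contra hne
  have hpos : 0 < ‖x - y‖ := norm_pos_iff.2 (sub_ne_zero.2 hne)
  obtain ⟨P, hP⟩ := hasRLIntegral_iff.1 hx _ (half_pos hpos)
  obtain ⟨Q, hQ⟩ := hasRLIntegral_iff.1 hy _ (half_pos hpos)
  linarith [hP.norm_sub_lt hQ]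

/-- Junk when `f` has no RL integral over `A`. -/
noncomputable def rlIntegral (μ : Measure Ω) (f : Ω → X) (A : Set Ω) : X :=
  Classical.epsilon (HasRLIntegral μ f A)

lemma hasRLIntegral_rlIntegral (h : ∃ x, HasRLIntegral μ f A x) :
    HasRLIntegral μ f A (rlIntegral μ f A) :=
  Classical.epsilon_spec h

lemma IsRLApprox.rlSum_inter {S : Set Ω} {Γ : ℕ → Set Ω} {T : ℕ → Ω}
    (h : IsRLApprox μ f A x ε P) (hΓ : IsRLPartition S Γ) (hAS : A ⊆ S) (hT : IsSampling Γ T)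
    (hpieces : ∀ j, (∃ k, Γ j ⊆ P k) ∨ Disjoint (Γ j) A) :
    RLSumAbsConv μ f (fun j => Γ j ∩ A) T ∧ ‖RLSum μ f (fun j => Γ j ∩ A) T - x‖ < ε := by
  refine h.2 _ (by simpa [inter_eq_right.2 hAS] using hΓ.inter h.1.measurableSet) (fun j => ?_) T
    (hT.inter fun j => (hpieces j).imp (fun ⟨k, hk⟩ => hk.trans (h.1.subset k)) id)
  rcases hpieces j with ⟨k, hk⟩ | hdisj
  · exact ⟨k, inter_subset_left.trans hk⟩
  · exact ⟨0, by simp [hdisj.inter_eq]⟩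

lemma hasRLIntegral_of_isEmpty [IsEmpty Ω] : HasRLIntegral μ f A x := fun _ _ =>
  ⟨fun _ => ∅,
    ⟨fun _ => .empty, fun _ _ _ => disjoint_bot_left, by simp [eq_empty_of_isEmpty A]⟩,
    fun _ _ _ T => isEmptyElim (T 0)⟩

variable [CompleteSpace X]

lemma IsRLApprox.restrict [Nonempty Ω] (h : IsRLApprox μ f univ x ε P)
    (hA : MeasurableSet A) :
    ∃ z, IsRLApprox μ f A z ε (fun i => P i ∩ A) := by
  obtain ⟨U, hU⟩ := exists_isSampling (fun i => P i ∩ Aᶜ)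
  have hPA : IsRLPartition A (fun i => P i ∩ A) := by simpa using h.1.inter hA
  have hPAc : IsRLPartition Aᶜ (fun i => P i ∩ Aᶜ) := by simpa using h.1.inter hA.compl
  refine ⟨x - RLSum μ f (fun i => P i ∩ Aᶜ) U, hPA, fun Γ hΓ hΓP T hT => ?_⟩
  have hglue : IsRLPartition univ (glue Γ fun i => P i ∩ Aᶜ) := by
    simpa using isRLPartition_glue disjoint_compl_right hΓ hPAc
  have hfiner : IsFinerPartition (glue Γ fun i => P i ∩ Aᶜ) P :=
    isFinerPartition_glue (hΓP.trans (isFinerPartition_inter P A)) (isFinerPartition_inter P Aᶜ)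
  obtain ⟨hconv, hlt⟩ := h.2 _ hglue hfiner _ (isSampling_glue hT hU)
  obtain ⟨hΓconv, -, hsum⟩ := hconv.of_glue
  exact ⟨hΓconv, by rwa [sub_sub_eq_add_sub, ← hsum]⟩

lemma exists_hasRLIntegral_of_tendsto [Nonempty Ω] {a : ℕ → X} {ε : ℕ → ℝ}
    {P : ℕ → ℕ → Set Ω} (h : ∀ n, IsRLApprox μ f A (a n) (ε n) (P n))
    (hε : Tendsto ε atTop (𝓝 0)) : ∃ y, HasRLIntegral μ f A y := by
  have hsmall {δ : ℝ} (hδ : 0 < δ) : ∀ᶠ n in atTop, ε n < δ := hε.eventually (gt_mem_nhds hδ)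
  have hcauchy : CauchySeq a := by
    refine Metric.cauchySeq_iff.2 fun δ hδ => ?_
    obtain ⟨N, hN⟩ := eventually_atTop.1 (hsmall (half_pos hδ))
    refine ⟨N, fun m hm n hn => ?_⟩
    rw [dist_eq_norm]
    linarith [(h m).norm_sub_lt (h n), hN m hm, hN n hn]
  obtain ⟨y, hy⟩ := cauchySeq_tendsto_of_complete hcauchy
  refine ⟨y, fun δ hδ => ?_⟩
  obtain ⟨n, hεn, hyn⟩ := ((hsmall (half_pos hδ)).and
    (hy.eventually (Metric.ball_mem_nhds y (half_pos hδ)))).exists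
  rw [dist_eq_norm] at hyn
  exact ⟨P n, (h n).mono (by linarith)⟩

lemma HasRLIntegral.exists_hasRLIntegral [Nonempty Ω] (hx : HasRLIntegral μ f univ x)
    (hA : MeasurableSet A) : ∃ y, HasRLIntegral μ f A y := by
  have (n : ℕ) : ∃ a P, IsRLApprox μ f A a (1 / (n + 1)) P := by
    obtain ⟨P, hP⟩ := hasRLIntegral_iff.1 hx _ Nat.one_div_pos_of_nat
    obtain ⟨a, ha⟩ := hP.restrict hA
    exact ⟨a, _, ha⟩
  choose a P h using this
  exact exists_hasRLIntegral_of_tendsto h tendsto_one_div_add_atTop_nhds_zero_nat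

lemma HasRLIntegral.union [IsFiniteMeasure μ] {a b : X} (hAB : Disjoint A B)
    (ha : HasRLIntegral μ f A a) (hb : HasRLIntegral μ f B b) :
    HasRLIntegral μ f (A ∪ B) (a + b) := by
  intro ε hε
  obtain ⟨PA, hPA⟩ := hasRLIntegral_iff.1 ha (ε / 2) (half_pos hε)
  obtain ⟨PB, hPB⟩ := hasRLIntegral_iff.1 hb (ε / 2) (half_pos hε)
  refine ⟨glue PA PB, isRLPartition_glue hAB hPA.1 hPB.1, fun Γ hΓ hΓP T hT => ?_⟩
  have hpieces (j : ℕ) : ((∃ k, Γ j ⊆ PA k) ∨ Disjoint (Γ j) A) ∧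
      ((∃ k, Γ j ⊆ PB k) ∨ Disjoint (Γ j) B) := by
    rcases hΓP.glue_cases j with ⟨k, hk⟩ | ⟨k, hk⟩
    · exact ⟨.inl ⟨k, hk⟩, .inr (hAB.mono_left (hk.trans (hPA.1.subset k)))⟩
    · exact ⟨.inr (hAB.symm.mono_left (hk.trans (hPB.1.subset k))), .inl ⟨k, hk⟩⟩
  obtain ⟨hcA, hltA⟩ := hPA.rlSum_inter hΓ subset_union_left hT fun j => (hpieces j).1
  obtain ⟨hcB, hltB⟩ := hPB.rlSum_inter hΓ subset_union_right hT fun j => (hpieces j).2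
  have hμ (j : ℕ) : μ (Γ j) = μ (Γ j ∩ A) + μ (Γ j ∩ B) := by
    rw [← measure_union (hAB.mono inter_subset_right inter_subset_right)
      ((hΓ.1 j).inter hPB.1.measurableSet), ← inter_union_distrib_left,
      inter_eq_left.2 (hΓ.subset j)]
  obtain ⟨hc, hsum⟩ := RLSumAbsConv.add_of_measure_eq hμ hcA hcB
  refine ⟨hc, ?_⟩
  rw [hsum, add_sub_add_comm]
  exact (norm_add_le _ _).trans_lt (by linarith)

end RLIntegral

section StepMajorant

variable {Ω X : Type*} [NormedAddCommGroup X] {f : Ω → X} {P : ℕ → Set Ω}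

/-- For a partition `P`, the supremum of `‖f‖ₑ` over the piece containing `s`. -/
noncomputable def stepMajorant (P : ℕ → Set Ω) (f : Ω → X) (s : Ω) : ℝ≥0∞ :=
  ∑' i, (P i).indicator (fun _ => ⨆ t ∈ P i, ‖f t‖ₑ) s

lemma enorm_le_stepMajorant {i : ℕ} {s t : Ω} (hs : s ∈ P i) (ht : t ∈ P i) :
    ‖f t‖ₑ ≤ stepMajorant P f s :=
  calc ‖f t‖ₑ ≤ ⨆ t ∈ P i, ‖f t‖ₑ := le_iSup₂ (f := fun t _ => ‖f t‖ₑ) t ht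
    _ = (P i).indicator (fun _ => ⨆ t ∈ P i, ‖f t‖ₑ) s :=
        (indicator_of_mem hs (fun _ => ⨆ t ∈ P i, ‖f t‖ₑ)).symm
    _ ≤ stepMajorant P f s := ENNReal.le_tsum i

variable [MeasurableSpace Ω] {μ : Measure Ω}

lemma measurable_stepMajorant (hP : ∀ i, MeasurableSet (P i)) :
    Measurable (stepMajorant P f) :=
  .tsum fun i => measurable_const.indicator (hP i)

lemma lintegral_stepMajorant (hP : ∀ i, MeasurableSet (P i)) :
    ∫⁻ s, stepMajorant P f s ∂μ = ∑' i, ⨆ t ∈ P i, μ (P i) * ‖f t‖ₑ := by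
  unfold stepMajorant
  rw [lintegral_tsum fun i => (measurable_const.indicator (hP i)).aemeasurable]
  simp [lintegral_indicator_const (hP _), mul_comm, ENNReal.mul_iSup]

lemma tsum_measure_mul_enorm_le_withDensity (hP : ∀ i, MeasurableSet (P i)) {A : Set Ω}
    {Γ : ℕ → Set Ω} {T : ℕ → Ω} (hΓ : IsRLPartition A Γ) (hΓP : IsFinerPartition Γ P)
    (hT : IsSampling Γ T) :
    ∑' j, μ (Γ j) * ‖f (T j)‖ₑ ≤ μ.withDensity (stepMajorant P f) A := by
  rw [← hΓ.2.2, measure_iUnion hΓ.2.1 hΓ.1]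
  refine ENNReal.tsum_le_tsum fun j => ?_
  rcases (Γ j).eq_empty_or_nonempty with hempty | hne
  · simp [hempty]
  obtain ⟨i, hi⟩ := hΓP j
  calc μ (Γ j) * ‖f (T j)‖ₑ = ∫⁻ _ in Γ j, ‖f (T j)‖ₑ ∂μ := by rw [setLIntegral_const, mul_comm]
    _ ≤ ∫⁻ s in Γ j, stepMajorant P f s ∂μ :=
      setLIntegral_mono (measurable_stepMajorant hP) fun s hs =>
        enorm_le_stepMajorant (hi hs) (hi (hT j hne))
    _ = μ.withDensity (stepMajorant P f) (Γ j) := (withDensity_apply _ (hΓ.1 j)).symm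

end StepMajorant

section Domination

variable {Ω X : Type*} [MeasurableSpace Ω] [NormedAddCommGroup X] [NormedSpace ℝ X]
  [CompleteSpace X] [Nonempty Ω] {μ : Measure Ω} [IsFiniteMeasure μ] {f : Ω → X} {A : Set Ω}
  {P : ℕ → Set Ω} {x : X} {ε : ℝ}

lemma IsRLApprox.measure_mul_enorm_sub_le (h : IsRLApprox μ f A x ε P) {i : ℕ} {t t' : Ω}
    (ht : t ∈ P i) (ht' : t' ∈ P i) : μ (P i) * ‖f t - f t'‖ₑ ≤ ENNReal.ofReal (2 * ε) := by
  obtain ⟨T, hT⟩ := exists_isSampling P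
  have hupdate {s : Ω} (hs : s ∈ P i) : IsSampling P (Function.update T i s) := fun j hj => by
    rcases eq_or_ne j i with rfl | hji
    · simpa using hs
    · simpa [Function.update_of_ne hji] using hT j hj
  obtain ⟨hc, hlt⟩ := h.2 P h.1 (.refl P) _ (hupdate ht)
  obtain ⟨hc', hlt'⟩ := h.2 P h.1 (.refl P) _ (hupdate ht')
  have hdiff : (μ (P i)).toReal * ‖f t - f t'‖ < 2 * ε := by
    have := dist_triangle_right (RLSum μ f P (Function.update T i t))
      (RLSum μ f P (Function.update T i t')) x
    rw [dist_eq_norm, dist_eq_norm, dist_eq_norm, rlSum_update_sub_rlSum_update hc hc',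
      norm_smul, Real.norm_of_nonneg ENNReal.toReal_nonneg] at this
    linarith
  rw [← ofReal_norm, ← ENNReal.ofReal_toReal (measure_ne_top μ (P i)),
    ← ENNReal.ofReal_mul ENNReal.toReal_nonneg]
  exact ENNReal.ofReal_le_ofReal hdiff.le

lemma IsRLApprox.iSup_measure_mul_enorm_ne_top (h : IsRLApprox μ f A x ε P) (i : ℕ) :
    ⨆ t ∈ P i, μ (P i) * ‖f t‖ₑ ≠ ∞ := by
  rcases (P i).eq_empty_or_nonempty with hempty | ⟨t₀, ht₀⟩
  · simp [hempty]
  refine ne_top_of_le_ne_top (b := μ (P i) * ‖f t₀‖ₑ + ENNReal.ofReal (2 * ε))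
    (ENNReal.add_ne_top.2 ⟨ENNReal.mul_ne_top (measure_ne_top μ _) enorm_ne_top,
      ENNReal.ofReal_ne_top⟩) (iSup₂_le fun t ht => ?_)
  calc μ (P i) * ‖f t‖ₑ ≤ μ (P i) * (‖f t₀‖ₑ + ‖f t - f t₀‖ₑ) := by
        gcongr; simpa using enorm_add_le (f t₀) (f t - f t₀)
    _ ≤ μ (P i) * ‖f t₀‖ₑ + ENNReal.ofReal (2 * ε) := by
        rw [mul_add]; gcongr; exact h.measure_mul_enorm_sub_le ht ht₀

lemma IsRLApprox.tsum_iSup_measure_mul_enorm_ne_top (h : IsRLApprox μ f A x ε P) :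
    ∑' i, ⨆ t ∈ P i, μ (P i) * ‖f t‖ₑ ≠ ∞ := by
  obtain ⟨T₀, hT₀⟩ := exists_isSampling P
  have (i : ℕ) : ∃ t, ((P i).Nonempty → t ∈ P i) ∧
      ⨆ t ∈ P i, μ (P i) * ‖f t‖ₑ ≤ μ (P i) * ‖f t‖ₑ * 2 := by
    rcases eq_or_ne (⨆ t ∈ P i, μ (P i) * ‖f t‖ₑ) 0 with h0 | h0
    · exact ⟨T₀ i, hT₀ i, by simp [h0]⟩
    obtain ⟨t, ht, hlt⟩ :=
      lt_biSup_iff.1 (ENNReal.half_lt_self h0 (h.iSup_measure_mul_enorm_ne_top i))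
    exact ⟨t, fun _ => ht,
      ((ENNReal.div_lt_iff (.inl two_ne_zero) (.inl ENNReal.ofNat_ne_top)).1 hlt).le⟩
  choose T hT hcT using this
  refine ne_top_of_le_ne_top ?_ (ENNReal.tsum_le_tsum hcT)
  rw [ENNReal.tsum_mul_right]
  exact ENNReal.mul_ne_top (rlSumAbsConv_iff.1 (h.2 P h.1 (.refl P) T hT).1) ENNReal.ofNat_ne_top

theorem HasRLIntegral.exists_isFiniteMeasure_norm_le (hx : HasRLIntegral μ f univ x) :
    ∃ ρ : Measure Ω, IsFiniteMeasure ρ ∧ ρ ≪ μ ∧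
      ∀ A y, HasRLIntegral μ f A y → ‖y‖ ≤ ρ.real A := by
  obtain ⟨P, hP⟩ := hasRLIntegral_iff.1 hx 1 one_pos
  have hfin := isFiniteMeasure_withDensity <|
    (lintegral_stepMajorant (μ := μ) (f := f) hP.1.1).trans_ne
      hP.tsum_iSup_measure_mul_enorm_ne_top
  refine ⟨μ.withDensity (stepMajorant P f), hfin, withDensity_absolutelyContinuous _ _,
    fun A y hy => le_of_forall_pos_lt_add fun δ hδ => ?_⟩
  obtain ⟨Q, hQ⟩ := hasRLIntegral_iff.1 hy δ hδ
  set Γ := commonRefinement Q fun i => P i ∩ A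
  have hΓ : IsRLPartition A Γ :=
    isRLPartition_commonRefinement hQ.1 (by simpa using hP.1.inter hQ.1.measurableSet)
  obtain ⟨T, hT⟩ := exists_isSampling Γ
  obtain ⟨hconv, hlt⟩ := hQ.2 _ hΓ (isFinerPartition_commonRefinement_left _ _) T hT
  have hnorm : ‖RLSum μ f Γ T‖ ≤ (μ.withDensity (stepMajorant P f)).real A := by
    refine hconv.norm_rlSum_le.trans ?_
    rw [← toReal_tsum_measure_mul_enorm]
    exact ENNReal.toReal_mono (measure_ne_top _ _) (tsum_measure_mul_enorm_le_withDensity hP.1.1 hΓ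
      ((isFinerPartition_commonRefinement_right _ _).trans (isFinerPartition_inter P A)) hT)
  calc ‖y‖ ≤ ‖RLSum μ f Γ T‖ + ‖RLSum μ f Γ T - y‖ := by
        rw [norm_sub_rev]; exact norm_le_norm_add_norm_sub' _ _
    _ < _ := add_lt_add_of_le_of_lt hnorm hlt

end Domination

section DominatedSetFunction

variable {Ω X : Type*} [MeasurableSpace Ω] [NormedAddCommGroup X] {ν : Set Ω → X}
  {ρ : Measure Ω} [IsFiniteMeasure ρ]

lemma sum_norm_le_of_norm_le_measureReal (hle : ∀ A, MeasurableSet A → ‖ν A‖ ≤ ρ.real A)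
    {n : ℕ} {s : Fin n → Set Ω} (hs : ∀ i, MeasurableSet (s i))
    (hd : Pairwise (Function.onFun Disjoint s)) : ∑ i, ‖ν (s i)‖ ≤ ρ.real univ :=
  calc ∑ i, ‖ν (s i)‖ ≤ ∑ i, ρ.real (s i) := Finset.sum_le_sum fun i _ => hle _ (hs i)
    _ = ρ.real (⋃ i, s i) := (measureReal_iUnion_fintype hd hs).symm
    _ ≤ ρ.real univ := measureReal_mono (subset_univ _)

lemma hasSum_of_norm_le_measureReal [CompleteSpace X]
    (hadd : ∀ A B, MeasurableSet A → MeasurableSet B → Disjoint A B → ν (A ∪ B) = ν A + ν B)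
    (hle : ∀ A, MeasurableSet A → ‖ν A‖ ≤ ρ.real A) {s : ℕ → Set Ω}
    (hs : ∀ i, MeasurableSet (s i)) (hd : Pairwise (Function.onFun Disjoint s)) :
    HasSum (fun i => ν (s i)) (ν (⋃ i, s i)) := by
  have htail_meas (n : ℕ) : MeasurableSet (⋃ i ≥ n, s i) :=
    .biUnion (to_countable _) fun i _ => hs i
  have hsplit (n : ℕ) : ν (⋃ i, s i) = ∑ i ∈ Finset.range n, ν (s i) + ν (⋃ i ≥ n, s i) := by
    induction n with
    | zero => simp
    | succ n ih =>
      have htail : ⋃ i ≥ n, s i = s n ∪ ⋃ i ≥ n + 1, s i := by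
        ext; simp [le_iff_eq_or_lt (a := n), or_and_right, exists_or]
      rw [ih, htail, hadd _ _ (hs n) (htail_meas _)
        (disjoint_iUnion₂_right.2 fun i hi => hd (by omega)), Finset.sum_range_succ, add_assoc]
  have hsummable : Summable fun i => ν (s i) :=
    .of_norm_bounded (ENNReal.summable_toReal <| measure_iUnion hd hs ▸ measure_ne_top _ _)
      fun i => hle _ (hs i)
  have htail : Tendsto (fun n => ν (⋃ i ≥ n, s i)) atTop (𝓝 0) :=
    squeeze_zero_norm (fun n => hle _ (htail_meas n)) <| by
      simpa [Function.comp_def, measureReal_def] using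
        (ENNReal.tendsto_toReal ENNReal.zero_ne_top).comp
          (tendsto_measure_biUnion_Ici_zero_of_pairwise_disjoint
            (fun i => (hs i).nullMeasurableSet) hd)
  rw [hsummable.hasSum_iff_tendsto_nat]
  have := (tendsto_const_nhds (x := ν (⋃ i, s i))).sub htail
  rw [sub_zero] at this
  exact this.congr fun n => by rw [hsplit n, add_sub_cancel_right]

end DominatedSetFunction

/-- If `X` has the Radon–Nikodým property with respect to `μ` (every countably
additive `X`-valued vector measure of bounded variation vanishing on `μ`-null sets has a
Bochner-integrable density), then every RL-integrable `f : Ω → X` has a Bochner-integrable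
equivalent. -/
theorem bochnerEquivalent_of_RNP
    {Ω X : Type*} [MeasurableSpace Ω] [NormedAddCommGroup X] [NormedSpace ℝ X] [CompleteSpace X]
    (μ : Measure Ω) [IsFiniteMeasure μ]
    (hRNP : ∀ ν : Set Ω → X,
      (∀ s : ℕ → Set Ω, (∀ i, MeasurableSet (s i)) → Pairwise (Function.onFun Disjoint s) →
        HasSum (fun i => ν (s i)) (ν (⋃ i, s i))) →
      (∃ C : ℝ, ∀ (n : ℕ) (s : Fin n → Set Ω), (∀ i, MeasurableSet (s i)) →
        Pairwise (Function.onFun Disjoint s) → ∑ i, ‖ν (s i)‖ ≤ C) →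
      (∀ A : Set Ω, MeasurableSet A → μ A = 0 → ν A = 0) →
      ∃ g : Ω → X, Integrable g μ ∧ ∀ A : Set Ω, MeasurableSet A → ν A = ∫ ω in A, g ω ∂μ)
    (f : Ω → X) (hf : ∃ x, HasRLIntegral μ f Set.univ x) :
    ∃ g : Ω → X, BochnerEquivalent μ f g := by
  obtain ⟨x, hx⟩ := hf
  rcases isEmpty_or_nonempty Ω with hΩ | hΩ
  · exact ⟨0, integrable_zero _ _ _, fun A _ => hasRLIntegral_of_isEmpty⟩
  have hν (A : Set Ω) (hA : MeasurableSet A) : HasRLIntegral μ f A (rlIntegral μ f A) :=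
    hasRLIntegral_rlIntegral (hx.exists_hasRLIntegral hA)
  obtain ⟨ρ, hρ, hρμ, hνρ⟩ := hx.exists_isFiniteMeasure_norm_le
  have hadd (A B : Set Ω) (hA : MeasurableSet A) (hB : MeasurableSet B) (hAB : Disjoint A B) :
      rlIntegral μ f (A ∪ B) = rlIntegral μ f A + rlIntegral μ f B :=
    (hν _ (hA.union hB)).unique ((hν A hA).union hAB (hν B hB))
  have hle (A : Set Ω) (hA : MeasurableSet A) : ‖rlIntegral μ f A‖ ≤ ρ.real A :=
    hνρ A _ (hν A hA)
  obtain ⟨g, hg, hνg⟩ := hRNP (rlIntegral μ f)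
    (fun s hs hd => hasSum_of_norm_le_measureReal hadd hle hs hd)
    ⟨ρ.real univ, fun _ s hs hd => sum_norm_le_of_norm_le_measureReal hle hs hd⟩
    (fun A hA h0 => norm_le_zero_iff.1 <| (hle A hA).trans_eq <| by
      simp [measureReal_def, hρμ h0])
  exact ⟨g, hg, fun A hA => hνg A hA ▸ hν A hA⟩
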